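/- Let d, b be positive integers with ⌈d/b⌉ ≥ 3 odd. The graph G*₁(d,b), formed by taking d disjoint copies of H = K_{d-⌈d/b⌉+2} ∨ complement(((⌈d/b⌉-1)/2)·K₂), adding a set S of ⌈d/b⌉-1 new vertices, and matching the vertices of S to the ⌈d/b⌉-1 vertices of degree d-1 in each copy of H, is a d-regular graph that is not 1/b-tough: indeed |S|/c(G*₁(d,b)-S) = (⌈d/b⌉-1)/d < 1/b. -/

import Mathlib

/-!
A vertex of `S` has one neighbour in each of the `d` copies of `H`. In a copy, a cocktail-party
vertex sees its partner in `S`, the `c - 3` cocktail-party vertices outside its own pair and the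
`d - c + 2` clique vertices; a clique vertex sees the `c - 1` cocktail-party vertices and the other
`d - c + 1` clique vertices. So `G*₁(d,b)` is `d`-regular as soon as `c ≤ d`, which holds since
`c = ⌈d/b⌉`. Deleting `S` leaves the `d` copies, each connected through its clique, and the
ratio bound `(c - 1)/d < 1/b` is `c - 1 < d/b`, i.e. `c - 1 < ⌈d/b⌉`.
-/

open scoped Classical

/-- Vertices of `G*₁(d,b)` (with `c = ⌈d/b⌉`): a set `S` of `c - 1` new vertices, plus `d`
copies of `H(d,b) = K_{d-c+2} ∨ complement(((c-1)/2) • K₂)`; in each copy the cocktail party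
part has `c - 1` vertices (`Sum.inl`) and the clique part has `d - c + 2` vertices
(`Sum.inr`). -/
abbrev GVert (d c : ℕ) := Fin (c - 1) ⊕ (Fin d × (Fin (c - 1) ⊕ Fin (d - c + 2)))

/-- The graph `G*₁(d,b)`: inside each copy, the cocktail party part (complement of the perfect
matching pairing `2k` with `2k+1`) is joined completely to the clique part; the `s`-th vertex of
`S` is matched to the `s`-th cocktail party vertex (the vertices of degree `d - 1` in the copy)
of every copy. -/
def Gstar (d c : ℕ) : SimpleGraph (GVert d c) :=
  SimpleGraph.fromRel fun a b =>
    match a, b with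
    | .inl s, .inr (_, .inl v) => s = v
    | .inr (i, x), .inr (j, y) =>
        i = j ∧ (match x, y with
          | .inl v, .inl w => (v : ℕ) / 2 ≠ (w : ℕ) / 2
          | _, _ => True)
    | _, _ => False

open Finset

lemma Nat.ceil_natCast_div_le (d b : ℕ) : ⌈(d : ℚ) / b⌉₊ ≤ d := by
  rcases b.eq_zero_or_pos with rfl | hb
  · simp
  · exact Nat.ceil_le.mpr (_root_.div_le_self d.cast_nonneg (Nat.one_le_cast.mpr hb))

lemma Nat.ceil_natCast_div_sub_one_div_lt {d b : ℕ} (h : 0 < ⌈(d : ℚ) / b⌉₊) :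
    ((⌈(d : ℚ) / b⌉₊ : ℝ) - 1) / d < 1 / b := by
  set c := ⌈(d : ℚ) / b⌉₊ with hc
  have hb : 0 < b := Nat.pos_of_ne_zero fun hb => by simp [hc, hb] at h
  have hd : 0 < d := Nat.pos_of_ne_zero fun hd => by simp [hc, hd] at h
  have hlt : ((c - 1 : ℕ) : ℚ) < d / b := Nat.lt_ceil.mp (Nat.sub_one_lt h.ne')
  rw [Nat.cast_sub h, Nat.cast_one, lt_div_iff₀ (by exact_mod_cast hb)] at hlt
  rw [div_lt_div_iff₀ (by exact_mod_cast hd) (by exact_mod_cast hb), one_mul]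
  exact_mod_cast hlt

lemma Fin.card_filter_div_two_ne {n : ℕ} (hn : Even n) (v : Fin n) :
    #{w : Fin n | (v : ℕ) / 2 ≠ (w : ℕ) / 2} = n - 2 := by
  have hpair : ({w : Fin n | (v : ℕ) / 2 = (w : ℕ) / 2} : Finset (Fin n)) =
      {⟨2 * ((v : ℕ) / 2), by grind⟩, ⟨2 * ((v : ℕ) / 2) + 1, by grind⟩} := by
    ext w
    simp only [mem_filter, mem_univ, true_and, mem_insert, mem_singleton, Fin.ext_iff]
    omega
  have hsplit := card_filter_add_card_filter_not (s := univ)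
    (fun w : Fin n => (v : ℕ) / 2 = (w : ℕ) / 2)
  rw [hpair, card_pair (by simp [Fin.ext_iff]), card_univ, Fintype.card_fin] at hsplit
  simp only [ne_eq]
  omega

lemma SimpleGraph.card_connectedComponent_eq_of_section {V ι : Type*} (G : SimpleGraph V)
    (f : V → ι) (s : ι → V) (hadj : ∀ x y, G.Adj x y → f x = f y) (hfs : ∀ i, f (s i) = i)
    (hreach : ∀ x, G.Reachable x (s (f x))) :
    Nat.card G.ConnectedComponent = Nat.card ι := by
  have hwalk : ∀ {x y} (p : G.Walk x y), f x = f y := by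
    intro x y p
    induction p with
    | nil => rfl
    | cons h _ ih => exact (hadj _ _ h).trans ih
  refine (Nat.card_eq_of_bijective (fun i => G.connectedComponentMk (s i)) ⟨?_, ?_⟩).symm
  · intro i j hij
    simpa [hfs] using hwalk (ConnectedComponent.eq.mp hij).some
  · exact ConnectedComponent.ind fun x => ⟨f x, (ConnectedComponent.sound (hreach x)).symm⟩

lemma SimpleGraph.degree_eq_sum_ite {V : Type*} [Fintype V] (G : SimpleGraph V)
    [DecidableRel G.Adj] (v : V) : G.degree v = ∑ w, if G.Adj v w then 1 else 0 := by
  rw [← card_neighborFinset_eq_degree, neighborFinset_eq_filter, card_filter]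

namespace Gstar

variable {d c : ℕ}

@[simp] lemma not_adj_inl_inl (s t : Fin (c - 1)) : ¬ (Gstar d c).Adj (.inl s) (.inl t) := by
  simp [Gstar]

@[simp] lemma adj_inl_inr_iff (s : Fin (c - 1)) (i : Fin d) (x : Fin (c - 1) ⊕ Fin (d - c + 2)) :
    (Gstar d c).Adj (.inl s) (.inr (i, x)) ↔ x = .inl s := by
  cases x <;> simp [Gstar, eq_comm]

@[simp] lemma adj_inr_inl_iff (s : Fin (c - 1)) (i : Fin d) (x : Fin (c - 1) ⊕ Fin (d - c + 2)) :
    (Gstar d c).Adj (.inr (i, x)) (.inl s) ↔ x = .inl s := by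
  rw [SimpleGraph.adj_comm, adj_inl_inr_iff]

@[simp] lemma adj_copy_inl_inl_iff (i j : Fin d) (v w : Fin (c - 1)) :
    (Gstar d c).Adj (.inr (i, .inl v)) (.inr (j, .inl w)) ↔ i = j ∧ (v : ℕ) / 2 ≠ (w : ℕ) / 2 := by
  simp only [Gstar, SimpleGraph.fromRel_adj]
  grind

@[simp] lemma adj_copy_inl_inr_iff (i j : Fin d) (v : Fin (c - 1)) (u : Fin (d - c + 2)) :
    (Gstar d c).Adj (.inr (i, .inl v)) (.inr (j, .inr u)) ↔ i = j := by
  simp [Gstar, eq_comm]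

@[simp] lemma adj_copy_inr_inl_iff (i j : Fin d) (v : Fin (c - 1)) (u : Fin (d - c + 2)) :
    (Gstar d c).Adj (.inr (i, .inr u)) (.inr (j, .inl v)) ↔ i = j := by
  simp [Gstar, eq_comm]

@[simp] lemma adj_copy_inr_inr_iff (i j : Fin d) (u u' : Fin (d - c + 2)) :
    (Gstar d c).Adj (.inr (i, .inr u)) (.inr (j, .inr u')) ↔ i = j ∧ u ≠ u' := by
  simp only [Gstar, SimpleGraph.fromRel_adj]
  grind

lemma degree_inl (s : Fin (c - 1)) : (Gstar d c).degree (.inl s) = d := by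
  rw [SimpleGraph.degree_eq_sum_ite, Fintype.sum_sum_type, Fintype.sum_prod_type]
  simp

lemma degree_copy_inl (hc3 : 3 ≤ c) (hcd : c ≤ d) (hodd : Odd c) (i : Fin d) (v : Fin (c - 1)) :
    (Gstar d c).degree (.inr (i, .inl v)) = d := by
  rw [SimpleGraph.degree_eq_sum_ite, Fintype.sum_sum_type, Fintype.sum_prod_type]
  simp only [Fintype.sum_sum_type, adj_inr_inl_iff, adj_copy_inl_inl_iff, adj_copy_inl_inr_iff,
    ite_and, sum_ite_irrel, sum_const_zero, sum_add_distrib, sum_ite_eq, mem_univ, if_true]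
  simp only [sum_boole, Nat.cast_id, Sum.inl.injEq, filter_eq, mem_univ, if_true, card_singleton,
    sum_const, card_univ, Fintype.card_fin, smul_eq_mul, mul_one]
  rw [Fin.card_filter_div_two_ne (Nat.Odd.sub_odd hodd odd_one)]
  omega

lemma degree_copy_inr (hc : 1 ≤ c) (hcd : c ≤ d) (i : Fin d) (u : Fin (d - c + 2)) :
    (Gstar d c).degree (.inr (i, .inr u)) = d := by
  rw [SimpleGraph.degree_eq_sum_ite, Fintype.sum_sum_type, Fintype.sum_prod_type]
  simp only [Fintype.sum_sum_type, adj_inr_inl_iff, adj_copy_inr_inr_iff, adj_copy_inr_inl_iff,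
    ite_and, sum_ite_irrel, sum_const_zero, sum_add_distrib, sum_ite_eq, mem_univ, if_true]
  simp only [sum_boole, Nat.cast_id, reduceCtorEq, filter_false, card_empty, filter_ne, mem_univ,
    card_erase_of_mem, sum_const, card_univ, Fintype.card_fin, smul_eq_mul, mul_one]
  omega

lemma isRegularOfDegree (hc3 : 3 ≤ c) (hcd : c ≤ d) (hodd : Odd c) :
    (Gstar d c).IsRegularOfDegree d
  | .inl s => degree_inl s
  | .inr (i, .inl v) => degree_copy_inl hc3 hcd hodd i v
  | .inr (i, .inr u) => degree_copy_inr (by omega) hcd i u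

lemma card_connectedComponent_comap_inr :
    Nat.card ((Gstar d c).comap Sum.inr).ConnectedComponent = d := by
  let hub : Fin (d - c + 2) := ⟨0, by omega⟩
  refine (SimpleGraph.card_connectedComponent_eq_of_section _ Prod.fst (fun i => (i, .inr hub))
    ?_ (fun _ => rfl) ?_).trans (Nat.card_eq_fintype_card.trans (Fintype.card_fin d))
  · rintro ⟨i, v | u⟩ ⟨j, w | u'⟩ h <;> simp_all
  · rintro ⟨i, v | u⟩
    · exact SimpleGraph.Adj.reachable (by simp)
    · rcases eq_or_ne u hub with rfl | hu
      · rfl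
      · exact SimpleGraph.Adj.reachable (by simpa using hu)

lemma card_connectedComponent_induce_compl_range_inl :
    Nat.card ((Gstar d c).induce
      (Set.range (Sum.inl : Fin (c - 1) → GVert d c))ᶜ).ConnectedComponent = d := by
  rw [Set.compl_range_inl]
  exact (Nat.card_congr (SimpleGraph.Embedding.comap Function.Embedding.inr
    _).isoInduceRange.connectedComponentEquiv.symm).trans card_connectedComponent_comap_inr

end Gstar

theorem stmt13_general (d b c : ℕ)
    (hc : c = Nat.ceil ((d : ℚ) / b)) (hc3 : 3 ≤ c) (hodd : Odd c) :
    (Gstar d c).IsRegularOfDegree d ∧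
      Nat.card ((Gstar d c).induce
        ((Set.range (Sum.inl : Fin (c - 1) → GVert d c))ᶜ)).ConnectedComponent = d ∧
      ((c : ℝ) - 1) / d < 1 / b := by
  subst hc
  exact ⟨Gstar.isRegularOfDegree hc3 (Nat.ceil_natCast_div_le d b) hodd,
    Gstar.card_connectedComponent_induce_compl_range_inl,
    Nat.ceil_natCast_div_sub_one_div_lt (by omega)⟩

theorem stmt13 (d b c : ℕ) (hd : 0 < d) (hb : 0 < b)
    (hc : c = Nat.ceil ((d : ℚ) / b)) (hc3 : 3 ≤ c) (hodd : Odd c) :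
    (Gstar d c).IsRegularOfDegree d ∧
      Nat.card ((Gstar d c).induce
        ((Set.range (Sum.inl : Fin (c - 1) → GVert d c))ᶜ)).ConnectedComponent = d ∧
      ((c : ℝ) - 1) / d < 1 / b :=
  stmt13_general d b c hc hc3 hodd
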